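/- Let n, q ≥ 1, let Θ_1, …, Θ_q be n×n real matrices, and let F be the block companion matrix of (Θ_1, …, Θ_q). Suppose F = T · Λ · T⁻¹ where T is an invertible (nq)×(nq) real matrix and Λ is an (nq)×(nq) real diagonal matrix whose diagonal entries all have absolute value at most λ for some λ ≥ 0; set κ = ‖T‖₂ · ‖T⁻¹‖₂. Suppose y : ℤ → ℝ^n satisfies y_t = −∑_{i=1}^q Θ_i · y_{t−i} for every integer t ≥ 1, and suppose c ≥ 0 is such that ‖y_{−i}‖₂ ≤ c for every i = 0, 1, …, q−1. Then for every integer m ≥ 0, ‖y_m‖₂ ≤ κ · λ^m · c · √q. -/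

import Mathlib

/-- The block companion matrix of `n×n` real matrices `Θ 0, …, Θ (q-1)` (representing
Θ_1, …, Θ_q), indexed by pairs `(block index, within-block index)`: the first block row is
`(-Θ_1, …, -Θ_q)`, the block in position `(i+1, i)` is the identity, all other blocks are `0`. -/
def blockCompanionMatrix {n q : ℕ} (Θ : Fin q → Matrix (Fin n) (Fin n) ℝ) :
    Matrix (Fin q × Fin n) (Fin q × Fin n) ℝ :=
  fun p r =>
    if (p.1 : ℕ) = 0 then -Θ r.1 p.2 r.2
    else if (p.1 : ℕ) = (r.1 : ℕ) + 1 then (if p.2 = r.2 then 1 else 0)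
    else 0

/-- The Euclidean (ℓ²) norm of a real vector indexed by a finite type. -/
noncomputable def euclNorm {ι : Type*} [Fintype ι] (v : ι → ℝ) : ℝ :=
  ‖(WithLp.equiv 2 (ι → ℝ)).symm v‖

/-- The operator norm of a square real matrix induced by the Euclidean norm
(i.e. its largest singular value). -/
noncomputable def matrixOpNorm {ι : Type*} [Fintype ι] [DecidableEq ι]
    (A : Matrix ι ι ℝ) : ℝ :=
  ‖Matrix.toEuclideanCLM (𝕜 := ℝ) A‖

/-! The state vector `Y_m = (y_m, y_{m-1}, …, y_{m-q+1})` obeys `Y_{m+1} = F Y_m`, so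
`Y_m = F^m Y_0 = T Λ^m T⁻¹ Y_0`. Hence `‖y_m‖ ≤ ‖Y_m‖ ≤ ‖T‖ ‖T⁻¹‖ λ^m ‖Y_0‖`, and `‖Y_0‖ ≤ c √q`
because each of its `q` blocks has norm at most `c`. -/

open Matrix

section EuclNorm

variable {ι : Type*} [Fintype ι]

lemma euclNorm_eq_sqrt_sum_sq (v : ι → ℝ) : euclNorm v = √(∑ i, v i ^ 2) := by
  simp [euclNorm, EuclideanSpace.norm_eq, sq_abs]

lemma euclNorm_nonneg (v : ι → ℝ) : 0 ≤ euclNorm v :=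
  norm_nonneg _

lemma euclNorm_mulVec_le [DecidableEq ι] (A : Matrix ι ι ℝ) (v : ι → ℝ) :
    euclNorm (A *ᵥ v) ≤ matrixOpNorm A * euclNorm v := by
  simpa [euclNorm, matrixOpNorm] using (toEuclideanCLM (𝕜 := ℝ) A).le_opNorm (WithLp.toLp 2 v)

lemma matrixOpNorm_nonneg [DecidableEq ι] (A : Matrix ι ι ℝ) : 0 ≤ matrixOpNorm A :=
  norm_nonneg _

lemma euclNorm_diagonal_mulVec_le [DecidableEq ι] {d : ι → ℝ} {lam : ℝ} (hlam : 0 ≤ lam)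
    (hd : ∀ i, |d i| ≤ lam) (v : ι → ℝ) :
    euclNorm (diagonal d *ᵥ v) ≤ lam * euclNorm v := by
  rw [euclNorm_eq_sqrt_sum_sq, euclNorm_eq_sqrt_sum_sq, ← Real.sqrt_sq hlam,
    ← Real.sqrt_mul (sq_nonneg _), Finset.mul_sum]
  gcongr with i
  rw [mulVec_diagonal, mul_pow, ← sq_abs (d i)]
  gcongr
  exact hd i

lemma euclNorm_conj_diagonal_pow_mulVec_le [DecidableEq ι] (T : Matrix ι ι ℝ) {d : ι → ℝ}
    {lam : ℝ} (hlam : 0 ≤ lam) (hd : ∀ i, |d i| ≤ lam) (N : ℕ) (v : ι → ℝ) :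
    euclNorm ((T * diagonal d ^ N * T⁻¹) *ᵥ v) ≤
      matrixOpNorm T * matrixOpNorm T⁻¹ * lam ^ N * euclNorm v := by
  have hdN : ∀ i, |d i ^ N| ≤ lam ^ N := fun i => by
    rw [abs_pow]
    exact pow_le_pow_left₀ (abs_nonneg _) (hd i) N
  have hT := matrixOpNorm_nonneg T
  rw [← mulVec_mulVec, ← mulVec_mulVec, diagonal_pow]
  calc euclNorm (T *ᵥ diagonal (d ^ N) *ᵥ T⁻¹ *ᵥ v)
      ≤ matrixOpNorm T * euclNorm (diagonal (d ^ N) *ᵥ T⁻¹ *ᵥ v) := euclNorm_mulVec_le _ _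
    _ ≤ matrixOpNorm T * (lam ^ N * euclNorm (T⁻¹ *ᵥ v)) := by
        gcongr
        exact euclNorm_diagonal_mulVec_le (pow_nonneg hlam N) hdN _
    _ ≤ matrixOpNorm T * (lam ^ N * (matrixOpNorm T⁻¹ * euclNorm v)) := by
        gcongr
        exact euclNorm_mulVec_le _ _
    _ = matrixOpNorm T * matrixOpNorm T⁻¹ * lam ^ N * euclNorm v := by ring

variable {κ : Type*} [Fintype κ]

lemma euclNorm_slice_le (v : ι × κ → ℝ) (i : ι) :
    euclNorm (fun j => v (i, j)) ≤ euclNorm v := by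
  rw [euclNorm_eq_sqrt_sum_sq, euclNorm_eq_sqrt_sum_sq, Fintype.sum_prod_type]
  gcongr
  exact Finset.single_le_sum (f := fun i => ∑ j, v (i, j) ^ 2) (fun _ _ => by positivity)
    (Finset.mem_univ i)

lemma euclNorm_le_mul_sqrt_card {v : ι × κ → ℝ} {c : ℝ} (hc : 0 ≤ c)
    (hv : ∀ i, euclNorm (fun j => v (i, j)) ≤ c) :
    euclNorm v ≤ c * √(Fintype.card ι) := by
  have hsq : ∀ i, ∑ j, v (i, j) ^ 2 ≤ c ^ 2 := fun i => by
    have := pow_le_pow_left₀ (euclNorm_nonneg _) (hv i) 2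
    rwa [euclNorm_eq_sqrt_sum_sq, Real.sq_sqrt (by positivity)] at this
  rw [euclNorm_eq_sqrt_sum_sq, Fintype.sum_prod_type, ← Real.sqrt_sq hc,
    ← Real.sqrt_mul (sq_nonneg _)]
  gcongr
  calc ∑ i, ∑ j, v (i, j) ^ 2 ≤ ∑ _i : ι, c ^ 2 := Finset.sum_le_sum fun i _ => hsq i
    _ = c ^ 2 * Fintype.card ι := by simp [mul_comm]

end EuclNorm

lemma Matrix.conj_pow_of_isUnit {ι R : Type*} [Fintype ι] [DecidableEq ι] [CommRing R]
    {T : Matrix ι ι R} (hT : IsUnit T) (Λ : Matrix ι ι R) (N : ℕ) : (T * Λ * T⁻¹) ^ N = T * Λ ^ N * T⁻¹ := by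
  obtain ⟨u, rfl⟩ := hT
  rw [← coe_units_inv]
  exact Units.conj_pow u Λ N

section Companion

variable {n q : ℕ}

def companionState (q : ℕ) (y : ℤ → Fin n → ℝ) (m : ℤ) : Fin q × Fin n → ℝ :=
  fun p => y (m - p.1) p.2

lemma companionState_slice (q : ℕ) (y : ℤ → Fin n → ℝ) (m : ℤ) (i : Fin q) :
    (fun j => companionState q y m (i, j)) = y (m - i) :=
  rfl

lemma blockCompanionMatrix_mulVec_companionState (Θ : Fin q → Matrix (Fin n) (Fin n) ℝ)
    {y : ℤ → Fin n → ℝ} {m : ℤ}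
    (hy : y (m + 1) = -∑ i : Fin q, Θ i *ᵥ y (m + 1 - ((i : ℕ) + 1))) :
    blockCompanionMatrix Θ *ᵥ companionState q y m = companionState q y (m + 1) := by
  ext ⟨i, j⟩
  simp only [mulVec, dotProduct, blockCompanionMatrix, Fintype.sum_prod_type, companionState]
  by_cases hi : (i : ℕ) = 0
  · simp only [hi, if_true, CharP.cast_eq_zero, sub_zero, hy, neg_mul, Finset.sum_neg_distrib,
      Pi.neg_apply, Finset.sum_apply, mulVec, dotProduct, add_sub_add_right_eq_sub]
  · obtain ⟨k, hk⟩ : ∃ k : ℕ, (i : ℕ) = k + 1 := ⟨(i : ℕ) - 1, by omega⟩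
    have hkq : k < q := by omega
    have hcond : ∀ r : Fin q, (i : ℕ) = r + 1 ↔ r = ⟨k, hkq⟩ := fun r => by
      simp only [Fin.ext_iff]
      omega
    simp only [hi, if_false, hcond, ite_mul, zero_mul, one_mul, Finset.sum_ite_irrel,
      Finset.sum_const_zero, Finset.sum_ite_eq, Finset.sum_ite_eq', Finset.mem_univ, if_true]
    rw [hk]
    push_cast
    ring_nf

lemma companionState_eq_pow_mulVec (Θ : Fin q → Matrix (Fin n) (Fin n) ℝ) {y : ℤ → Fin n → ℝ}
    (hy : ∀ t : ℤ, 1 ≤ t → y t = -∑ i : Fin q, Θ i *ᵥ y (t - ((i : ℕ) + 1))) (N : ℕ) :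
    companionState q y N = blockCompanionMatrix Θ ^ N *ᵥ companionState q y 0 := by
  induction N with
  | zero => simp
  | succ N ih =>
    rw [pow_succ', ← mulVec_mulVec, ← ih,
      blockCompanionMatrix_mulVec_companionState Θ (hy _ (by omega))]
    push_cast
    rfl

end Companion

theorem stmt_7_general {n q : ℕ} (hq : 1 ≤ q)
    (Θ : Fin q → Matrix (Fin n) (Fin n) ℝ)
    (T Λ : Matrix (Fin q × Fin n) (Fin q × Fin n) ℝ)
    (d : Fin q × Fin n → ℝ) (lam κ c : ℝ)
    (hlam : 0 ≤ lam) (hT : IsUnit T) (hΛ : Λ = Matrix.diagonal d)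
    (hd : ∀ i, |d i| ≤ lam)
    (hF : blockCompanionMatrix Θ = T * Λ * T⁻¹)
    (hκ : κ = matrixOpNorm T * matrixOpNorm T⁻¹)
    (y : ℤ → Fin n → ℝ)
    (hy : ∀ t : ℤ, 1 ≤ t →
      y t = -∑ i : Fin q, (Θ i).mulVec (y (t - ((i : ℕ) + 1))))
    (hc : 0 ≤ c) (hyc : ∀ i : Fin q, euclNorm (y (-(i : ℕ))) ≤ c) :
    ∀ m : ℤ, 0 ≤ m →
      euclNorm (y m) ≤ κ * lam ^ m.toNat * c * Real.sqrt q := by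
  intro m hm
  lift m to ℕ using hm
  have hY0 : euclNorm (companionState q y 0) ≤ c * √q := by
    simpa using euclNorm_le_mul_sqrt_card hc (v := companionState q y 0) fun i => by
      simpa [companionState_slice] using hyc i
  calc euclNorm (y m)
      ≤ euclNorm (companionState q y m) := by
        simpa [companionState_slice] using euclNorm_slice_le (companionState q y m) ⟨0, hq⟩
    _ = euclNorm ((T * diagonal d ^ m * T⁻¹) *ᵥ companionState q y 0) := by
        rw [companionState_eq_pow_mulVec Θ hy, hF, hΛ, conj_pow_of_isUnit hT]
    _ ≤ κ * lam ^ m * (c * √q) := by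
        rw [hκ]
        grw [euclNorm_conj_diagonal_pow_mulVec_le T hlam hd, hY0]
        exact mul_nonneg (mul_nonneg (matrixOpNorm_nonneg T) (matrixOpNorm_nonneg T⁻¹))
          (pow_nonneg hlam m)
    _ = κ * lam ^ (m : ℤ).toNat * c * √q := by simp [mul_assoc]

theorem stmt_7 {n q : ℕ} (hn : 1 ≤ n) (hq : 1 ≤ q)
    (Θ : Fin q → Matrix (Fin n) (Fin n) ℝ)
    (T Λ : Matrix (Fin q × Fin n) (Fin q × Fin n) ℝ)
    (d : Fin q × Fin n → ℝ) (lam κ c : ℝ)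
    (hlam : 0 ≤ lam) (hT : IsUnit T) (hΛ : Λ = Matrix.diagonal d)
    (hd : ∀ i, |d i| ≤ lam)
    (hF : blockCompanionMatrix Θ = T * Λ * T⁻¹)
    (hκ : κ = matrixOpNorm T * matrixOpNorm T⁻¹)
    (y : ℤ → Fin n → ℝ)
    (hy : ∀ t : ℤ, 1 ≤ t →
      y t = -∑ i : Fin q, (Θ i).mulVec (y (t - ((i : ℕ) + 1))))
    (hc : 0 ≤ c) (hyc : ∀ i : Fin q, euclNorm (y (-(i : ℕ))) ≤ c) :
    ∀ m : ℤ, 0 ≤ m →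
      euclNorm (y m) ≤ κ * lam ^ m.toNat * c * Real.sqrt q :=
  stmt_7_general hq Θ T Λ d lam κ c hlam hT hΛ hd hF hκ y hy hc hyc
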